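/- arXiv:2404.17076 — 2 statements merged into one kernel-verified Lean document; each statement's English description precedes it below -/
import Mathlib

section
/- Let X be a set, g : X → X a map, S ⊆ X a set with g(S) ⊆ S, w : X → ℝ a function, u a real number with 0 < u ≤ 1 and u ≤ w(x) for all x ∈ S, and q ≥ 1 a natural number. Assume that for every x ∈ S there exists k with 1 ≤ k ≤ q such that the product w(x)·w(g(x))⋯w(g^{k−1}(x)) > 2. Then for every x ∈ S and every n ≥ 0 one has w(x)·w(g(x))⋯w(g^{n−1}(x)) ≥ 2^{⌊n/q⌋}·u^q. -/
/-!
Strong induction on `n`. A segment shorter than `q` has product at least `u ^ n ≥ u ^ q`,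
since `u ≤ 1`. A longer one starting in `S` splits into a first block of length `k ≤ q` with
product `> 2` and a shorter segment starting at `g^[k] x ∈ S`; removing the block lowers
`⌊n / q⌋` by at most one, so the factor `2` it contributes pays for that.
-/

open Finset Function

section

variable {α M : Type*}

def birkhoffProd [CommMonoid M] (f : α → α) (w : α → M) (n : ℕ) (x : α) : M :=
  ∏ k ∈ range n, w (f^[k] x)

theorem birkhoffProd_add [CommMonoid M] (f : α → α) (w : α → M) (m n : ℕ) (x : α) :
    birkhoffProd f w (m + n) x = birkhoffProd f w m x * birkhoffProd f w n (f^[m] x) := by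
  simp_rw [birkhoffProd, prod_range_add, add_comm m, iterate_add_apply]

variable [CommSemiring M] [PartialOrder M] [IsOrderedRing M] {f : α → α} {S : Set α}
  {w : α → M} {u : M}

theorem pow_le_birkhoffProd (hS : Set.MapsTo f S S) (hw : ∀ x ∈ S, u ≤ w x) (hu : 0 ≤ u)
    {x : α} (hx : x ∈ S) (n : ℕ) : u ^ n ≤ birkhoffProd f w n x := by
  simpa [birkhoffProd] using
    prod_le_prod (s := range n) (fun _ _ => hu) (fun i _ => hw _ (hS.iterate i hx))

theorem pow_div_mul_pow_le_birkhoffProd (hS : Set.MapsTo f S S) (hw : ∀ x ∈ S, u ≤ w x)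
    (hu0 : 0 ≤ u) (hu1 : u ≤ 1) {c : M} (hc : 1 ≤ c) {q : ℕ} (hq : 0 < q)
    (hblock : ∀ x ∈ S, ∃ k, 1 ≤ k ∧ k ≤ q ∧ c ≤ birkhoffProd f w k x)
    {x : α} (hx : x ∈ S) (n : ℕ) : c ^ (n / q) * u ^ q ≤ birkhoffProd f w n x := by
  induction n using Nat.strong_induction_on generalizing x with
  | _ n ih =>
    rcases lt_or_ge n q with hnq | hqn
    · rw [Nat.div_eq_of_lt hnq, pow_zero, one_mul]
      exact (pow_le_pow_of_le_one hu0 hu1 hnq.le).trans (pow_le_birkhoffProd hS hw hu0 hx n)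
    obtain ⟨k, hk1, hkq, hck⟩ := hblock x hx
    obtain ⟨m, rfl⟩ : ∃ m, n = k + m := ⟨n - k, by omega⟩
    have hdiv : (k + m) / q ≤ m / q + 1 :=
      calc (k + m) / q ≤ (m + q) / q := Nat.div_le_div_right (by omega)
        _ = m / q + 1 := Nat.add_div_right m hq
    have hrest := ih m (by omega) (hS.iterate k hx)
    have hc0 : 0 ≤ c := zero_le_one.trans hc
    calc c ^ ((k + m) / q) * u ^ q ≤ c ^ (m / q + 1) * u ^ q :=
          mul_le_mul_of_nonneg_right (pow_le_pow_right₀ hc hdiv) (pow_nonneg hu0 q)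
      _ = c * (c ^ (m / q) * u ^ q) := by ring
      _ ≤ birkhoffProd f w k x * birkhoffProd f w m (f^[k] x) :=
          mul_le_mul hck hrest (mul_nonneg (pow_nonneg hc0 _) (pow_nonneg hu0 q)) (hc0.trans hck)
      _ = birkhoffProd f w (k + m) x := (birkhoffProd_add f w k m x).symm

end

/-- Block-decomposition argument for uniform expansion: if `g` maps `S` into itself,
the weight `w` satisfies `u ≤ w` on `S` with `0 < u ≤ 1`, and from each point of `S`
some block of length at most `q` has weight-product `> 2`, then the weight-product
along any orbit segment of length `n` is at least `2^⌊n/q⌋·u^q`. -/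
theorem block_expansion {X : Type*} (g : X → X) (S : Set X) (hS : Set.MapsTo g S S)
    (w : X → ℝ) (u : ℝ) (hu0 : 0 < u) (hu1 : u ≤ 1) (hw : ∀ x ∈ S, u ≤ w x)
    (q : ℕ) (hq : 1 ≤ q)
    (hblock : ∀ x ∈ S, ∃ k : ℕ, 1 ≤ k ∧ k ≤ q ∧ 2 < ∏ i ∈ Finset.range k, w (g^[i] x)) :
    ∀ x ∈ S, ∀ n : ℕ, 2 ^ (n / q) * u ^ q ≤ ∏ i ∈ Finset.range n, w (g^[i] x) :=
  fun _ hx n => pow_div_mul_pow_le_birkhoffProd hS hw hu0.le hu1 one_le_two hq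
    (fun y hy => (hblock y hy).imp fun _ ⟨hk1, hkq, hprod⟩ => ⟨hk1, hkq, hprod.le⟩) hx n
end

section
/- For every z ∈ ℂ with Re(z) ≤ −(ℓ+3) one has Re(f_c(z)) ≤ ℓ·Re(z) + ℓ + 2 ≤ Re(z) − 1; consequently, by induction, Re(f_c^{n}(z)) ≤ Re(z) − n for every n ≥ 0, so the real parts of the orbit of z tend to −∞. In particular the left half-plane {Re(z) ≤ −(ℓ+3)} is forward invariant under f_c. -/
/-! On the half-plane `Re z ≤ 0` we have `-Re (exp z) ≤ e^{Re z} ≤ 1`, and the constant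
`c - (ℓ - 1) Log c` has real part at most `ℓ + 1` because `Re c ≤ ℓ + 1` and `|c| ≥ 1`.
Hence `Re (f z) ≤ ℓ Re z + ℓ + 2`, which is at most `Re z - 1` once `Re z ≤ -(ℓ + 3)`.
A map that lowers a quantity by `1` whenever it is below a threshold keeps it below that
threshold, so the estimate iterates. -/

open Complex

lemma re_mul_add_sub_exp_le (a : ℝ) (b z : ℂ) (hz : z.re ≤ 0) :
    ((a : ℂ) * z + b - exp z).re ≤ a * z.re + b.re + 1 := by
  have hexp : -(exp z).re ≤ 1 :=
    calc -(exp z).re ≤ ‖exp z‖ := (neg_le_abs _).trans (abs_re_le_norm _)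
      _ = Real.exp z.re := norm_exp z
      _ ≤ 1 := Real.exp_le_one_iff.mpr hz
  simp only [sub_re, add_re, re_ofReal_mul]
  linarith

lemma re_sub_mul_log_le {a : ℝ} (ha : 2 ≤ a) {c : ℂ} (hc : ‖c - a‖ < 1) :
    (c - (a - 1) * log c).re ≤ a + 1 := by
  have hre : c.re ≤ a + 1 := by
    have := re_le_norm (c - a)
    rw [sub_re, ofReal_re] at this
    linarith
  have hnorm : 1 ≤ ‖c‖ := by
    have := norm_sub_norm_le (a : ℂ) (a - c)
    rw [sub_sub_cancel, norm_sub_rev, norm_real, Real.norm_of_nonneg (by linarith)] at this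
    linarith
  have hlog : 0 ≤ (a - 1) * Real.log ‖c‖ :=
    mul_nonneg (by linarith) (Real.log_nonneg hnorm)
  have : (c - (a - 1) * log c).re = c.re - (a - 1) * Real.log ‖c‖ := by
    rw [← ofReal_one, ← ofReal_sub, sub_re, re_ofReal_mul, log_re]
  linarith

lemma mul_add_le_sub_one {a x : ℝ} (ha : 2 ≤ a) (hx : x ≤ -(a + 3)) :
    a * x + a + 2 ≤ x - 1 := by
  nlinarith

lemma apply_iterate_le_sub_natCast {α : Type*} (f : α → α) (φ : α → ℝ) (R : ℝ)
    (hf : ∀ w, φ w ≤ R → φ (f w) ≤ φ w - 1) {z : α} (hz : φ z ≤ R) (n : ℕ) :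
    φ (f^[n] z) ≤ φ z - n := by
  induction n with
  | zero => simp
  | succ n ih =>
    rw [Function.iterate_succ_apply']
    have := hf _ (by linarith [(Nat.cast_nonneg n : (0 : ℝ) ≤ n)])
    push_cast
    linarith

/-- For every `z` with `Re z ≤ −(ℓ+3)` one has
`Re (f_c z) ≤ ℓ·Re z + ℓ + 2 ≤ Re z − 1`; consequently `Re (f_c^[n] z) ≤ Re z − n` for
every `n ≥ 0`, so the real parts of the orbit tend to `−∞`. In particular the half-plane
`{Re z ≤ −(ℓ+3)}` is forward invariant under `f_c`. -/
theorem left_half_plane_invariant (ℓ : ℕ) (hℓ : 2 ≤ ℓ) (c : ℂ) (hc : ‖c - ℓ‖ < 1)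
    (f : ℂ → ℂ)
    (hf : ∀ z : ℂ, f z = (ℓ : ℂ) * z + c - ((ℓ : ℂ) - 1) * Complex.log c - Complex.exp z) :
    ∀ z : ℂ, z.re ≤ -((ℓ : ℝ) + 3) →
      (f z).re ≤ (ℓ : ℝ) * z.re + ℓ + 2 ∧
      (ℓ : ℝ) * z.re + ℓ + 2 ≤ z.re - 1 ∧
      (∀ n : ℕ, (f^[n] z).re ≤ z.re - n) ∧
      (f z).re ≤ -((ℓ : ℝ) + 3) := by
  have hℓ' : (2 : ℝ) ≤ ℓ := by exact_mod_cast hℓ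
  have hconst : (c - (ℓ - 1) * log c).re ≤ ℓ + 1 := by
    simpa using re_sub_mul_log_le hℓ' (c := c) (by exact_mod_cast hc)
  have hlinear (w : ℂ) (hw : w.re ≤ -((ℓ : ℝ) + 3)) : (f w).re ≤ ℓ * w.re + ℓ + 2 := by
    have hfw : f w = ((ℓ : ℝ) : ℂ) * w + (c - (ℓ - 1) * log c) - exp w := by
      rw [hf]; push_cast; ring
    rw [hfw]
    linarith [re_mul_add_sub_exp_le ℓ (c - (ℓ - 1) * log c) w (by linarith)]
  have hstep (w : ℂ) (hw : w.re ≤ -((ℓ : ℝ) + 3)) : (f w).re ≤ w.re - 1 :=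
    (hlinear w hw).trans (mul_add_le_sub_one hℓ' hw)
  intro z hz
  exact ⟨hlinear z hz, mul_add_le_sub_one hℓ' hz,
    apply_iterate_le_sub_natCast f re _ hstep hz, by linarith [hstep z hz]⟩
end
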